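/- Let L_1(x) = I_{H_1} + Σ_{j=1}^g A_j x_j and L_2(x) = I_{H_2} + Σ_{j=1}^g B_j x_j be monic linear operator pencils with bounded self-adjoint coefficients on separable real Hilbert spaces H_1, H_2, and suppose D_{ʰL_1}(1) ⊆ D_{ʰL_2}(1). Then for each n ∈ ℕ the following are equivalent: (i) D_{ʰL_1}(n) ⊆ D_{ʰL_2}(n); (ii) for all real n×n matrices Y, X_1, …, X_g (not necessarily symmetric), if the bounded operator on H_1^n with (i,k) block Y_{ik} I_{H_1} + Σ_{j=1}^g (X_j)_{ik} A_j is positive semidefinite, then the bounded operator on H_2^n with (i,k) block Y_{ik} I_{H_2} + Σ_{j=1}^g (X_j)_{ik} B_j is positive semidefinite. -/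

import Mathlib

open scoped RealInnerProductSpace

noncomputable section

variable {E H K : Type*}

/-- A bounded operator on a real inner product space is symmetric (self-adjoint). -/
def OpIsSymm [NormedAddCommGroup E] [InnerProductSpace ℝ E] (T : E →L[ℝ] E) : Prop :=
  ∀ u v : E, ⟪T u, v⟫ = ⟪u, T v⟫

/-- A bounded operator on a real inner product space is positive semidefinite. -/
def OpIsPos [NormedAddCommGroup E] [InnerProductSpace ℝ E] (T : E →L[ℝ] E) : Prop :=
  OpIsSymm T ∧ ∀ v : E, 0 ≤ ⟪T v, v⟫

/-- A bounded operator is positive definite: `T - ε • id` is positive semidefinite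
for some `ε > 0`. -/
def OpIsPosDef [NormedAddCommGroup E] [InnerProductSpace ℝ E] (T : E →L[ℝ] E) : Prop :=
  ∃ ε : ℝ, 0 < ε ∧ OpIsPos (T - ε • ContinuousLinearMap.id ℝ E)

/-- The block operator on the Hilbert direct sum `H^n` whose `(i,k)` block is `c i k`. -/
def blockOp [NormedAddCommGroup H] [InnerProductSpace ℝ H] {n : ℕ}
    (c : Fin n → Fin n → (H →L[ℝ] H)) :
    (PiLp 2 fun _ : Fin n => H) →L[ℝ] (PiLp 2 fun _ : Fin n => H) :=
  (((PiLp.continuousLinearEquiv 2 ℝ (fun _ : Fin n => H)).symm.toContinuousLinearMap.comp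
    (ContinuousLinearMap.pi fun i : Fin n =>
      ∑ k : Fin n, (c i k).comp (ContinuousLinearMap.proj k))).comp
    (PiLp.continuousLinearEquiv 2 ℝ (fun _ : Fin n => H)).toContinuousLinearMap)

/-- Evaluation of the homogeneous linear pencil `I_H x₀ + Σ_j A_j x_j` at a tuple of
`n × n` matrices: the operator on `H^n` with `(i,k)` block
`(X₀)_{ik} I_H + Σ_j (X_j)_{ik} A_j`. -/
def hEval [NormedAddCommGroup H] [InnerProductSpace ℝ H] {g n : ℕ}
    (A : Fin g → (H →L[ℝ] H)) (X0 : Matrix (Fin n) (Fin n) ℝ)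
    (X : Fin g → Matrix (Fin n) (Fin n) ℝ) :
    (PiLp 2 fun _ : Fin n => H) →L[ℝ] (PiLp 2 fun _ : Fin n => H) :=
  blockOp fun i k => X0 i k • (1 : H →L[ℝ] H) + ∑ j, X j i k • A j

/-- Evaluation of the monic linear pencil `I_H + Σ_j A_j x_j` at a tuple of
`n × n` matrices. -/
def monicEval [NormedAddCommGroup H] [InnerProductSpace ℝ H] {g n : ℕ}
    (A : Fin g → (H →L[ℝ] H)) (X : Fin g → Matrix (Fin n) (Fin n) ℝ) :
    (PiLp 2 fun _ : Fin n => H) →L[ℝ] (PiLp 2 fun _ : Fin n => H) :=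
  hEval A 1 X

/-- Positivity of the evaluation `L(X) = A₀ ⊗ I_K + Σ_j A_j ⊗ X_j` of a linear operator
pencil at a tuple of bounded operators on a Hilbert space `K`. -/
def operPencilPos [NormedAddCommGroup H] [InnerProductSpace ℝ H]
    [NormedAddCommGroup K] [InnerProductSpace ℝ K] {g : ℕ}
    (A0 : H →L[ℝ] H) (A : Fin g → (H →L[ℝ] H)) (X : Fin g → (K →L[ℝ] K)) : Prop :=
  ∀ (m : ℕ) (h : Fin m → H) (u : Fin m → K),
    0 ≤ ∑ i, ∑ l,
      (⟪A0 (h i), h l⟫ * ⟪u i, u l⟫ + ∑ j, ⟪A j (h i), h l⟫ * ⟪X j (u i), u l⟫)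

/-- A bundled separable real Hilbert space. -/
structure SepHilbert where
  carrier : Type
  [nacg : NormedAddCommGroup carrier]
  [ips : InnerProductSpace ℝ carrier]
  [cs : CompleteSpace carrier]
  [sep : TopologicalSpace.SeparableSpace carrier]

attribute [instance] SepHilbert.nacg SepHilbert.ips SepHilbert.cs SepHilbert.sep

/-!
If `ʰL₁(Y, X) ⪰ 0` then it is self-adjoint, and since the `A_j` are, its adjoint is
`ʰL₁(Yᵀ, Xᵀ)`; so `ʰL₁` vanishes at the skew part `(Yᵀ - Y, Xᵀ - X)`. Blockwise this says that
certain scalar combinations `y I + Σ_j x_j A_j` vanish, and the inclusion at level one, applied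
at `±(y, x)`, shows that the same combinations of `I` and the `B_j` vanish. Hence both pencils
take the same value at `(Y, X)` as at its symmetric part, where (i) applies.
-/

open scoped Matrix

section Block

variable [NormedAddCommGroup H] [InnerProductSpace ℝ H] {n : ℕ}

theorem blockOp_apply (c : Fin n → Fin n → (H →L[ℝ] H)) (v : PiLp 2 fun _ : Fin n => H)
    (i : Fin n) : blockOp c v i = ∑ k, c i k (v k) := by
  simp [blockOp, ContinuousLinearMap.pi]

theorem blockOp_eq_zero_iff {c : Fin n → Fin n → (H →L[ℝ] H)} :
    blockOp c = 0 ↔ ∀ i k, c i k = 0 := by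
  refine ⟨fun h i k => ?_, fun h => ?_⟩
  · ext x
    have := congr($h (WithLp.toLp 2 (Pi.single k x)) i)
    simpa [blockOp_apply, Pi.single_apply, apply_ite] using this
  · ext v i
    simp [blockOp_apply, h]

theorem inner_blockOp_apply (c : Fin n → Fin n → (H →L[ℝ] H)) (u v : PiLp 2 fun _ : Fin n => H) :
    ⟪blockOp c u, v⟫ = ∑ i, ∑ k, ⟪c i k (u k), v i⟫ := by
  simp only [PiLp.inner_apply, blockOp_apply, sum_inner]

end Block

section Pencil

variable [NormedAddCommGroup H] [InnerProductSpace ℝ H] {g n : ℕ} {A : Fin g → (H →L[ℝ] H)}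

def hPencil (A : Fin g → (H →L[ℝ] H)) (y : ℝ) (x : Fin g → ℝ) : H →L[ℝ] H :=
  y • (1 : H →L[ℝ] H) + ∑ j, x j • A j

theorem hEval_eq_blockOp (A : Fin g → (H →L[ℝ] H)) (Y : Matrix (Fin n) (Fin n) ℝ)
    (X : Fin g → Matrix (Fin n) (Fin n) ℝ) :
    hEval A Y X = blockOp fun i k => hPencil A (Y i k) fun j => X j i k :=
  rfl

theorem hEval_apply (A : Fin g → (H →L[ℝ] H)) (Y : Matrix (Fin n) (Fin n) ℝ)
    (X : Fin g → Matrix (Fin n) (Fin n) ℝ) (v : PiLp 2 fun _ : Fin n => H) (i : Fin n) :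
    hEval A Y X v i = ∑ k, (Y i k • v k + ∑ j, X j i k • A j (v k)) := by
  simp [hEval_eq_blockOp, blockOp_apply, hPencil]

theorem hEval_add (A : Fin g → (H →L[ℝ] H)) (Y Y' : Matrix (Fin n) (Fin n) ℝ)
    (X X' : Fin g → Matrix (Fin n) (Fin n) ℝ) :
    hEval A (Y + Y') (fun j => X j + X' j) = hEval A Y X + hEval A Y' X' := by
  ext v i
  simp only [hEval_apply, add_apply, PiLp.add_apply, Matrix.add_apply,
    add_smul, Finset.sum_add_distrib]
  abel

theorem hEval_sub (A : Fin g → (H →L[ℝ] H)) (Y Y' : Matrix (Fin n) (Fin n) ℝ)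
    (X X' : Fin g → Matrix (Fin n) (Fin n) ℝ) :
    hEval A (Y - Y') (fun j => X j - X' j) = hEval A Y X - hEval A Y' X' := by
  ext v i
  simp only [hEval_apply, sub_apply, PiLp.sub_apply, Matrix.sub_apply,
    sub_smul, ← Finset.sum_sub_distrib]
  exact Finset.sum_congr rfl fun k _ => by rw [Finset.sum_sub_distrib]; abel

theorem hEval_smul (A : Fin g → (H →L[ℝ] H)) (c : ℝ) (Y : Matrix (Fin n) (Fin n) ℝ)
    (X : Fin g → Matrix (Fin n) (Fin n) ℝ) :
    hEval A (c • Y) (fun j => c • X j) = c • hEval A Y X := by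
  ext v i
  simp only [hEval_apply, smul_apply, PiLp.smul_apply, Matrix.smul_apply,
    smul_eq_mul, mul_smul, Finset.smul_sum, smul_add]

theorem hEval_neg (A : Fin g → (H →L[ℝ] H)) (Y : Matrix (Fin n) (Fin n) ℝ)
    (X : Fin g → Matrix (Fin n) (Fin n) ℝ) :
    hEval A (-Y) (fun j => -X j) = -hEval A Y X := by
  rw [← neg_one_smul ℝ (hEval A Y X), ← hEval_smul]
  simp only [neg_one_smul]

theorem hEval_eq_zero_iff {Y : Matrix (Fin n) (Fin n) ℝ} {X : Fin g → Matrix (Fin n) (Fin n) ℝ} :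
    hEval A Y X = 0 ↔ ∀ i k, hPencil A (Y i k) (fun j => X j i k) = 0 :=
  blockOp_eq_zero_iff

theorem hPencil_opIsSymm (hA : ∀ j, OpIsSymm (A j)) (y : ℝ) (x : Fin g → ℝ) :
    OpIsSymm (hPencil A y x) := by
  intro u v
  simp only [hPencil, add_apply, smul_apply, sum_apply, one_apply_eq_self, inner_add_left,
    inner_add_right, real_inner_smul_left, real_inner_smul_right, sum_inner, inner_sum, hA _ u v]

theorem inner_hEval_apply (hA : ∀ j, OpIsSymm (A j)) (Y : Matrix (Fin n) (Fin n) ℝ)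
    (X : Fin g → Matrix (Fin n) (Fin n) ℝ) (u v : PiLp 2 fun _ : Fin n => H) :
    ⟪hEval A Y X u, v⟫ = ⟪u, hEval A Yᵀ (fun j => (X j)ᵀ) v⟫ := by
  rw [real_inner_comm _ u, hEval_eq_blockOp, hEval_eq_blockOp, inner_blockOp_apply,
    inner_blockOp_apply, Finset.sum_comm]
  simp only [Matrix.transpose_apply, hPencil_opIsSymm hA _ _ (u _), real_inner_comm (u _)]

theorem hEval_transpose_eq_of_opIsSymm (hA : ∀ j, OpIsSymm (A j))
    {Y : Matrix (Fin n) (Fin n) ℝ} {X : Fin g → Matrix (Fin n) (Fin n) ℝ}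
    (hsymm : OpIsSymm (hEval A Y X)) : hEval A Yᵀ (fun j => (X j)ᵀ) = hEval A Y X := by
  ext u : 1
  refine ext_inner_right ℝ fun v => ?_
  rw [hsymm, inner_hEval_apply hA]
  simp only [Matrix.transpose_transpose]

theorem hEval_symmetrize_eq {Y : Matrix (Fin n) (Fin n) ℝ} {X : Fin g → Matrix (Fin n) (Fin n) ℝ}
    (h : hEval A Yᵀ (fun j => (X j)ᵀ) = hEval A Y X) :
    hEval A ((2⁻¹ : ℝ) • (Y + Yᵀ)) (fun j => (2⁻¹ : ℝ) • (X j + (X j)ᵀ)) = hEval A Y X := by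
  rw [hEval_smul, hEval_add, h, ← two_smul ℝ, smul_smul, inv_mul_cancel₀ two_ne_zero, one_smul]

end Pencil

theorem OpIsPos.eq_zero_of_neg [NormedAddCommGroup E] [InnerProductSpace ℝ E] {T : E →L[ℝ] E}
    (hT : OpIsPos T) (hnegT : OpIsPos (-T)) : T = 0 := by
  have hquad (v : E) : ⟪T v, v⟫ = 0 := by
    have := hnegT.2 v
    simp only [neg_apply, inner_neg_left] at this
    linarith [hT.2 v]
  exact ContinuousLinearMap.coe_injective
    ((LinearMap.IsSymmetric.inner_map_self_eq_zero hT.1).mp hquad)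

theorem opIsPos_zero [NormedAddCommGroup E] [InnerProductSpace ℝ E] :
    OpIsPos (0 : E →L[ℝ] E) :=
  ⟨fun _ _ => by simp, fun _ => by simp⟩

section LevelOne

variable [NormedAddCommGroup H] [InnerProductSpace ℝ H] [NormedAddCommGroup K]
  [InnerProductSpace ℝ K] {g : ℕ} {A : Fin g → (H →L[ℝ] H)} {B : Fin g → (K →L[ℝ] K)}

/-- `D_{ʰL_A}(n) ⊆ D_{ʰL_B}(n)`. -/
def HomogeneousInclusion (A : Fin g → (H →L[ℝ] H)) (B : Fin g → (K →L[ℝ] K)) (n : ℕ) : Prop :=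
  ∀ (X0 : Matrix (Fin n) (Fin n) ℝ) (X : Fin g → Matrix (Fin n) (Fin n) ℝ),
    X0.IsSymm → (∀ j, (X j).IsSymm) → OpIsPos (hEval A X0 X) → OpIsPos (hEval B X0 X)

theorem hPencil_eq_zero_of_level_one
    (h1 : HomogeneousInclusion A B 1) {y : ℝ} {x : Fin g → ℝ} (hA : hPencil A y x = 0) : hPencil B y x = 0 := by
  set Y : Matrix (Fin 1) (Fin 1) ℝ := Matrix.of fun _ _ => y
  set X : Fin g → Matrix (Fin 1) (Fin 1) ℝ := fun j => Matrix.of fun _ _ => x j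
  have isSymm_of_fin_one (M : Matrix (Fin 1) (Fin 1) ℝ) : M.IsSymm :=
    Matrix.IsSymm.ext fun i k => by rw [Subsingleton.elim i k]
  have hA0 : hEval A Y X = 0 := hEval_eq_zero_iff.mpr fun _ _ => hA
  have hBpos : OpIsPos (hEval B Y X) :=
    h1 Y X (isSymm_of_fin_one _) (fun _ => isSymm_of_fin_one _) (hA0 ▸ opIsPos_zero)
  have hBneg : OpIsPos (-hEval B Y X) := by
    rw [← hEval_neg]
    exact h1 _ _ (isSymm_of_fin_one _) (fun _ => isSymm_of_fin_one _)
      (by rw [hEval_neg, hA0, neg_zero]; exact opIsPos_zero)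
  exact hEval_eq_zero_iff.mp (hBpos.eq_zero_of_neg hBneg) 0 0

theorem hEval_eq_zero_of_level_one
    (h1 : HomogeneousInclusion A B 1) {n : ℕ} {Y : Matrix (Fin n) (Fin n) ℝ} {X : Fin g → Matrix (Fin n) (Fin n) ℝ}
    (hA : hEval A Y X = 0) : hEval B Y X = 0 :=
  hEval_eq_zero_iff.mpr fun i k => hPencil_eq_zero_of_level_one h1 (hEval_eq_zero_iff.mp hA i k)

end LevelOne

theorem n_positivity_iff_homogeneous_inclusion_general
    {g : ℕ} {H1 H2 : Type}
    [NormedAddCommGroup H1] [InnerProductSpace ℝ H1]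
    [NormedAddCommGroup H2] [InnerProductSpace ℝ H2]
    (A : Fin g → (H1 →L[ℝ] H1)) (B : Fin g → (H2 →L[ℝ] H2))
    (hA : ∀ j, OpIsSymm (A j))
    (h1 : ∀ (X0 : Matrix (Fin 1) (Fin 1) ℝ) (X : Fin g → Matrix (Fin 1) (Fin 1) ℝ),
      X0.IsSymm → (∀ j, (X j).IsSymm) →
      OpIsPos (hEval A X0 X) → OpIsPos (hEval B X0 X))
    (n : ℕ) :
    (∀ (X0 : Matrix (Fin n) (Fin n) ℝ) (X : Fin g → Matrix (Fin n) (Fin n) ℝ),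
        X0.IsSymm → (∀ j, (X j).IsSymm) →
        OpIsPos (hEval A X0 X) → OpIsPos (hEval B X0 X)) ↔
    (∀ (Y : Matrix (Fin n) (Fin n) ℝ) (X : Fin g → Matrix (Fin n) (Fin n) ℝ),
        OpIsPos (hEval A Y X) → OpIsPos (hEval B Y X)) := by
  refine ⟨fun hsymm Y X hpos => ?_, fun h Y X _ _ => h Y X⟩
  have hAt := hEval_transpose_eq_of_opIsSymm hA hpos.1
  have hBt : hEval B Yᵀ (fun j => (X j)ᵀ) = hEval B Y X := by
    rw [← sub_eq_zero, ← hEval_sub] at hAt ⊢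
    exact hEval_eq_zero_of_level_one h1 hAt
  rw [← hEval_symmetrize_eq hBt]
  refine hsymm _ _ ((Matrix.isSymm_add_transpose_self Y).smul _)
    (fun j => (Matrix.isSymm_add_transpose_self (X j)).smul _) ?_
  rwa [hEval_symmetrize_eq hAt]

/-- `n`-positivity of the unital map `A_j ↦ B_j` is equivalent to the
inclusion `D_{ʰL₁}(n) ⊆ D_{ʰL₂}(n)` of the homogenized free spectrahedra at level `n`. -/
theorem n_positivity_iff_homogeneous_inclusion
    {g : ℕ} {H1 H2 : Type}
    [NormedAddCommGroup H1] [InnerProductSpace ℝ H1] [CompleteSpace H1]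
    [TopologicalSpace.SeparableSpace H1]
    [NormedAddCommGroup H2] [InnerProductSpace ℝ H2] [CompleteSpace H2]
    [TopologicalSpace.SeparableSpace H2]
    (A : Fin g → (H1 →L[ℝ] H1)) (B : Fin g → (H2 →L[ℝ] H2))
    (hA : ∀ j, OpIsSymm (A j)) (hB : ∀ j, OpIsSymm (B j))
    (h1 : ∀ (X0 : Matrix (Fin 1) (Fin 1) ℝ) (X : Fin g → Matrix (Fin 1) (Fin 1) ℝ),
      X0.IsSymm → (∀ j, (X j).IsSymm) →
      OpIsPos (hEval A X0 X) → OpIsPos (hEval B X0 X))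
    (n : ℕ) :
    (∀ (X0 : Matrix (Fin n) (Fin n) ℝ) (X : Fin g → Matrix (Fin n) (Fin n) ℝ),
        X0.IsSymm → (∀ j, (X j).IsSymm) →
        OpIsPos (hEval A X0 X) → OpIsPos (hEval B X0 X)) ↔
    (∀ (Y : Matrix (Fin n) (Fin n) ℝ) (X : Fin g → Matrix (Fin n) (Fin n) ℝ),
        OpIsPos (hEval A Y X) → OpIsPos (hEval B Y X)) :=
  n_positivity_iff_homogeneous_inclusion_general A B hA h1 n
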